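/- arXiv:2212.12104 — 9 statements merged into one kernel-verified Lean document; each statement's English description precedes it below -/
import Mathlib

section
/- For a finite cell-independent relation U over schema {A, ?B} where attribute A is certain and ?B is uncertain, the probability that a random sample of U satisfies the functional dependency A → B equals the product over all values a in the active domain of A of the sum over all values b of the product, over tuples i with U[i][A] = a, of the probability that the distribution U[i][?B] takes value b. -/
/-!
A sample `r` satisfies `A → B` exactly when it factors through `A`, i.e. `r = g ∘ A` for a unique
`g` on the active domain of `A`. Summing over such `g` and regrouping each product `∏ᵢ p i (g (A i))`
by the value of `A i` gives `∑_g ∏_a ∏_{A i = a} p i (g a)`, and expanding the product of sums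
`∏_a ∑_b p(a, b)` gives the same expression.
-/

open Finset Function Set

variable {ι κ V : Type*}

noncomputable def factorsThroughEquiv (f : ι → κ) :
    {r : ι → V // r.FactorsThrough f} ≃ (range f → V) where
  toFun r a := r.1 (rangeSplitting f a)
  invFun g := ⟨g ∘ rangeFactorization f, fun _ _ h => by simp [rangeFactorization, h]⟩
  left_inv r := Subtype.ext <| funext fun i => r.2 <| apply_rangeSplitting f _
  right_inv g := funext fun a => congrArg g (leftInverse_rangeSplitting f a)

theorem prod_comp_rangeFactorization {M : Type*} [CommMonoid M] [Fintype ι] [DecidableEq κ]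
    (f : ι → κ) (p : ι → V → M) (g : range f → V) :
    ∏ i, p i (g (rangeFactorization f i)) = ∏ a : range f, ∏ i with f i = a, p i (g a) := by
  rw [← Finset.prod_fiberwise univ (rangeFactorization f)]
  refine Finset.prod_congr rfl fun a _ => ?_
  refine Finset.prod_congr (by ext; simp [Subtype.ext_iff, rangeFactorization]) fun i hi => ?_
  exact congrArg (p i ∘ g) (Subtype.ext (Finset.mem_filter.mp hi).2)

theorem sum_filter_factorsThrough_prod {R : Type*} [CommSemiring R] [Fintype ι] [DecidableEq ι]
    [DecidableEq κ] [Fintype V] (f : ι → κ) (p : ι → V → R)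
    [DecidablePred fun r : ι → V => r.FactorsThrough f] :
    ∑ r : ι → V with r.FactorsThrough f, ∏ i, p i (r i)
      = ∏ a : range f, ∑ b, ∏ i with f i = a, p i b := by
  calc ∑ r : ι → V with r.FactorsThrough f, ∏ i, p i (r i)
      = ∑ r : {r : ι → V // r.FactorsThrough f}, ∏ i, p i (r.1 i) :=
        Finset.sum_subtype _ (by simp) _
    _ = ∑ g : range f → V, ∏ i, p i (g (rangeFactorization f i)) :=
        ((factorsThroughEquiv f).symm.sum_comp _).symm
    _ = ∑ g : range f → V, ∏ a : range f, ∏ i with f i = a, p i (g a) := by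
        simp only [prod_comp_rangeFactorization]
    _ = ∏ a : range f, ∑ b, ∏ i with f i = a, p i b := by
        rw [Finset.prod_univ_sum, Fintype.piFinset_univ]

theorem stmt0_general {ι V : Type} [Fintype ι] [Fintype V] [DecidableEq ι] [DecidableEq V]
    (Aval : ι → V) (p : ι → V → ℝ) :
    ∑ r ∈ Finset.univ.filter
        (fun r : ι → V => ∀ i j : ι, Aval i = Aval j → r i = r j),
        ∏ i : ι, p i (r i)
      = ∏ a ∈ Finset.univ.image Aval,
          ∑ b : V, ∏ i ∈ Finset.univ.filter (fun i => Aval i = a), p i b := by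
  classical
  rw [← Set.toFinset_range, ← Finset.prod_set_coe, ← sum_filter_factorsThrough_prod]
  exact Finset.sum_congr (Finset.filter_congr fun _ _ => Iff.rfl) fun _ _ => rfl

/-- For a CIR `U` over schema `{A, ?B}` (attribute `A` certain with values
`Aval i`, attribute `?B` uncertain with cell distribution `p i`), the probability that a random
sample satisfies the FD `A → B` equals the product, over all values `a` in the active domain of
`A`, of the sum over all values `b` of `p(a,b) = ∏_{i : Aval i = a} Pr_{U[i][?B]}(b)`. -/
theorem stmt0 {ι V : Type} [Fintype ι] [Fintype V] [DecidableEq ι] [DecidableEq V]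
    (Aval : ι → V) (p : ι → V → ℝ)
    (hnn : ∀ i b, 0 ≤ p i b) (hsum : ∀ i, ∑ b : V, p i b = 1) :
    ∑ r ∈ Finset.univ.filter
        (fun r : ι → V => ∀ i j : ι, Aval i = Aval j → r i = r j),
        ∏ i : ι, p i (r i)
      = ∏ a ∈ Finset.univ.image Aval,
          ∑ b : V, ∏ i ∈ Finset.univ.filter (fun i => Aval i = a), p i b :=
  stmt0_general Aval p
end

section
/- For a CIR U over schema {A, ?B}, a sample r is a most probable consistent sample with respect to the FD A → B if and only if, for every value a in the active domain of A, the common B-value b_a chosen by r for the tuples with A-value a maximizes p(a, b) = ∏_{i : U[i][A]=a} Pr_{U[i][?B]}(b). Consequently, a sample r that for each a independently picks a maximizer b_a of p(a,·) is a most probable database. -/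
/-!
Consistent samples are exactly the samples that are constant on each fibre `{i | Aval i = a}`, and
the probability of such a sample is the product over the active domain of the fibre weights
`p(a, b_a)`. The fibres are disjoint, so the factors can be maximised independently; conversely,
changing a most probable sample on a single fibre only changes its own factor, and the remaining
factor is positive because the most probable sample has positive probability.
-/

open Finset

namespace MostProbableDatabase

variable {ι α β : Type*} [DecidableEq α]

def IsConsistent (Aval : ι → α) (r : ι → β) : Prop :=
  ∀ i j, Aval i = Aval j → r i = r j

def updateFiber (Aval : ι → α) (r : ι → β) (a : α) (b : β) : ι → β :=
  fun j => if Aval j = a then b else r j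

lemma IsConsistent.updateFiber {Aval : ι → α} {r : ι → β} (hr : IsConsistent Aval r) (a : α)
    (b : β) : IsConsistent Aval (updateFiber Aval r a b) := by
  intro i j hij
  simp only [MostProbableDatabase.updateFiber, hij]
  split_ifs
  · rfl
  · exact hr i j hij

lemma IsConsistent.updateFiber_self {Aval : ι → α} {r : ι → β} (hr : IsConsistent Aval r)
    (i : ι) : MostProbableDatabase.updateFiber Aval r (Aval i) (r i) = r := by
  funext j
  by_cases hj : Aval j = Aval i
  · simp [MostProbableDatabase.updateFiber, hj, hr j i hj]
  · simp [MostProbableDatabase.updateFiber, hj]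

variable [Fintype ι]

def sampleProb (p : ι → β → ℝ) (r : ι → β) : ℝ :=
  ∏ i, p i (r i)

def fiberProb (Aval : ι → α) (p : ι → β → ℝ) (a : α) (b : β) : ℝ :=
  ∏ j ∈ univ.filter (fun j => Aval j = a), p j b

variable {Aval : ι → α} {p : ι → β → ℝ}

lemma prod_filter_eq_fiberProb {r : ι → β} (hr : IsConsistent Aval r) (i : ι) :
    ∏ j ∈ univ.filter (fun j => Aval j = Aval i), p j (r j) = fiberProb Aval p (Aval i) (r i) :=
  prod_congr rfl fun j hj => by rw [hr j i (mem_filter.mp hj).2]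

lemma sampleProb_le_of_fiberProb_le (hnn : ∀ i b, 0 ≤ p i b) {r r' : ι → β}
    (hr : IsConsistent Aval r) (hr' : IsConsistent Aval r')
    (hle : ∀ i, fiberProb Aval p (Aval i) (r' i) ≤ fiberProb Aval p (Aval i) (r i)) :
    sampleProb p r' ≤ sampleProb p r := by
  have fiberwise (s : ι → β) : ∏ a ∈ univ.image Aval, ∏ j ∈ univ.filter (fun j => Aval j = a),
      p j (s j) = sampleProb p s :=
    prod_fiberwise_of_maps_to (fun i _ => mem_image_of_mem _ (mem_univ i)) _
  rw [← fiberwise r, ← fiberwise r']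
  refine prod_le_prod (fun a _ => prod_nonneg fun j _ => hnn _ _) fun a ha => ?_
  obtain ⟨i, -, rfl⟩ := mem_image.mp ha
  rw [prod_filter_eq_fiberProb hr, prod_filter_eq_fiberProb hr']
  exact hle i

lemma sampleProb_updateFiber (r : ι → β) (a : α) (b : β) :
    sampleProb p (updateFiber Aval r a b) =
      fiberProb Aval p a b * ∏ j ∈ univ.filter (fun j => ¬Aval j = a), p j (r j) := by
  rw [sampleProb, ← prod_filter_mul_prod_filter_not univ (fun j => Aval j = a)]
  congr 1 <;> exact prod_congr rfl fun j hj => by simp [updateFiber, (mem_filter.mp hj).2]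

lemma fiberProb_le_of_isMax (hnn : ∀ i b, 0 ≤ p i b) {r : ι → β} (hr : IsConsistent Aval r)
    (hpos : 0 < sampleProb p r)
    (hmax : ∀ r', IsConsistent Aval r' → sampleProb p r' ≤ sampleProb p r) (i : ι) (b : β) :
    fiberProb Aval p (Aval i) b ≤ fiberProb Aval p (Aval i) (r i) := by
  set R := ∏ j ∈ univ.filter (fun j => ¬Aval j = Aval i), p j (r j)
  have hself : sampleProb p r = fiberProb Aval p (Aval i) (r i) * R := by
    rw [← sampleProb_updateFiber, hr.updateFiber_self]
  have hR : 0 < R :=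
    pos_of_mul_pos_right (hself ▸ hpos) (prod_nonneg fun j _ => hnn _ _)
  have hle := hmax _ (hr.updateFiber (Aval i) b)
  rw [sampleProb_updateFiber, hself] at hle
  exact le_of_mul_le_mul_right hle hR

end MostProbableDatabase

open MostProbableDatabase in
theorem stmt1_general {ι V : Type} [Fintype ι] [DecidableEq V]
    (Aval : ι → V) (p : ι → V → ℝ)
    (hnn : ∀ i b, 0 ≤ p i b)
    (hex : ∃ r : ι → V, (∀ i j : ι, Aval i = Aval j → r i = r j) ∧ 0 < ∏ i : ι, p i (r i)) :
    (∀ r : ι → V, (∀ i j : ι, Aval i = Aval j → r i = r j) →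
      ((∀ r' : ι → V, (∀ i j : ι, Aval i = Aval j → r' i = r' j) →
          ∏ i : ι, p i (r' i) ≤ ∏ i : ι, p i (r i))
        ↔ ∀ i : ι, ∀ b : V,
            ∏ j ∈ Finset.univ.filter (fun j => Aval j = Aval i), p j b
              ≤ ∏ j ∈ Finset.univ.filter (fun j => Aval j = Aval i), p j (r i)))
    ∧ (∀ g : V → V,
        (∀ a ∈ Finset.univ.image Aval, ∀ b : V,
            ∏ j ∈ Finset.univ.filter (fun j => Aval j = a), p j b
              ≤ ∏ j ∈ Finset.univ.filter (fun j => Aval j = a), p j (g a)) →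
        ((∀ i j : ι, Aval i = Aval j → g (Aval i) = g (Aval j))
          ∧ ∀ r' : ι → V, (∀ i j : ι, Aval i = Aval j → r' i = r' j) →
              ∏ i : ι, p i (r' i) ≤ ∏ i : ι, p i (g (Aval i)))) := by
  refine ⟨fun r hr => ⟨fun hmax i b => ?_, fun hle r' hr' => ?_⟩, fun g hg => ?_⟩
  · obtain ⟨r₀, hr₀, hpos₀⟩ := hex
    exact fiberProb_le_of_isMax hnn hr (hpos₀.trans_le (hmax r₀ hr₀)) hmax i b
  · exact sampleProb_le_of_fiberProb_le hnn hr hr' fun i => hle i (r' i)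
  · have hgc : IsConsistent Aval (g ∘ Aval) := fun _ _ hij => congrArg g hij
    exact ⟨hgc, fun r' hr' => sampleProb_le_of_fiberProb_le hnn hgc hr'
      fun i => hg (Aval i) (mem_image_of_mem _ (mem_univ i)) (r' i)⟩

/-- For a CIR over `{A, ?B}` (with at least one positive-probability consistent
sample), a consistent sample `r` (one satisfying `A → B`) is a most probable database iff for
every value `a` in the active domain of `A`, the common `B`-value chosen by `r` on the tuples
with `A`-value `a` maximizes `p(a,b) = ∏_{i : Aval i = a} p i b`.  Consequently, any sample that
independently picks, for each `a`, a maximizer `b_a` of `p(a,·)` is a most probable database. -/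
theorem stmt1 {ι V : Type} [Fintype ι] [Fintype V] [DecidableEq ι] [DecidableEq V]
    (Aval : ι → V) (p : ι → V → ℝ)
    (hnn : ∀ i b, 0 ≤ p i b)
    (hex : ∃ r : ι → V, (∀ i j : ι, Aval i = Aval j → r i = r j) ∧ 0 < ∏ i : ι, p i (r i)) :
    (∀ r : ι → V, (∀ i j : ι, Aval i = Aval j → r i = r j) →
      ((∀ r' : ι → V, (∀ i j : ι, Aval i = Aval j → r' i = r' j) →
          ∏ i : ι, p i (r' i) ≤ ∏ i : ι, p i (r i))
        ↔ ∀ i : ι, ∀ b : V,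
            ∏ j ∈ Finset.univ.filter (fun j => Aval j = Aval i), p j b
              ≤ ∏ j ∈ Finset.univ.filter (fun j => Aval j = Aval i), p j (r i)))
    ∧ (∀ g : V → V,
        (∀ a ∈ Finset.univ.image Aval, ∀ b : V,
            ∏ j ∈ Finset.univ.filter (fun j => Aval j = a), p j b
              ≤ ∏ j ∈ Finset.univ.filter (fun j => Aval j = a), p j (g a)) →
        ((∀ i j : ι, Aval i = Aval j → g (Aval i) = g (Aval j))
          ∧ ∀ r' : ι → V, (∀ i j : ι, Aval i = Aval j → r' i = r' j) →
              ∏ i : ι, p i (r' i) ≤ ∏ i : ι, p i (g (Aval i)))) :=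
  stmt1_general Aval p hnn hex
end

section
/- For a CIR U over schema {A, ?B} where all cell distributions have finite support, U is possibly consistent with respect to the FD A → B (i.e., some positive-probability sample satisfies A → B) if and only if for every value a in the active domain of A, the intersection of the supports of the distributions U[i][?B] over all tuples i with U[i][A] = a is nonempty. -/
/-! A sample has positive probability iff every tuple takes a value in its support, and it
satisfies `A → B` iff it is constant on each `A`-fibre; so such a sample exists iff the supports
within each fibre share a value. -/

theorem Finset.prod_pos_iff_of_nonneg {ι R : Type*} [CommSemiring R] [PartialOrder R]
    [IsOrderedRing R] [Nontrivial R] [NoZeroDivisors R] {s : Finset ι} {f : ι → R}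
    (h0 : ∀ i ∈ s, 0 ≤ f i) :
    0 < ∏ i ∈ s, f i ↔ ∀ i ∈ s, 0 < f i := by
  rw [(Finset.prod_nonneg h0).lt_iff_ne', Finset.prod_ne_zero_iff]
  exact forall₂_congr fun i hi => (h0 i hi).lt_iff_ne'.symm

theorem exists_const_on_fibers_iff {ι α β : Type*} (f : ι → α) (P : ι → β → Prop) :
    (∃ r : ι → β, (∀ i j, f i = f j → r i = r j) ∧ ∀ i, P i (r i))
      ↔ ∀ a ∈ Set.range f, ∃ b, ∀ i, f i = a → P i b := by
  constructor
  · rintro ⟨r, hr, hP⟩ _ ⟨j, rfl⟩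
    exact ⟨r j, fun i hij => hr i j hij ▸ hP i⟩
  · intro h
    choose g hg using h
    exact ⟨fun i => g (f i) ⟨i, rfl⟩, fun i j hij => by simp only [hij],
      fun i => hg (f i) ⟨i, rfl⟩ i rfl⟩

theorem stmt2_general {ι V : Type} [Fintype ι] [DecidableEq V]
    (Aval : ι → V) (p : ι → V → ℝ)
    (hnn : ∀ i b, 0 ≤ p i b) :
    (∃ r : ι → V, (∀ i j : ι, Aval i = Aval j → r i = r j) ∧ 0 < ∏ i : ι, p i (r i))
      ↔ ∀ a ∈ Finset.univ.image Aval, ∃ b : V, ∀ i : ι, Aval i = a → 0 < p i b := by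
  simp only [Finset.prod_pos_iff_of_nonneg fun i _ => hnn i _]
  simpa only [Finset.mem_univ, forall_const, Finset.mem_image, true_and, Set.mem_range]
    using exists_const_on_fibers_iff Aval fun i b => 0 < p i b

/-- A CIR over `{A, ?B}` (certain `A`-values `Aval i`, finitely supported
cell distributions `p i` for `?B`) is possibly consistent with respect to the FD `A → B`
(some positive-probability sample satisfies `A → B`) iff for every value `a` in the active
domain of `A`, the intersection of the supports of the distributions of the tuples with
`A`-value `a` is nonempty. -/
theorem stmt2 {ι V : Type} [Fintype ι] [Fintype V] [DecidableEq V]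
    (Aval : ι → V) (p : ι → V → ℝ)
    (hnn : ∀ i b, 0 ≤ p i b) (hsum : ∀ i, ∑ b : V, p i b = 1) :
    (∃ r : ι → V, (∀ i j : ι, Aval i = Aval j → r i = r j) ∧ 0 < ∏ i : ι, p i (r i))
      ↔ ∀ a ∈ Finset.univ.image Aval, ∃ b : V, ∀ i : ι, Aval i = a → 0 < p i b :=
  stmt2_general Aval p hnn
end

section
/- Let G = (V_L, V_R, E) be a bipartite graph with |V_L| = |V_R|, and let U be the CIR over schema {A, ?B} with one tuple per vertex v ∈ V_L, where U[v][A] = v and U[v][?B] is the uniform distribution over the neighbor set N_v of v (assume every vertex of V_L has at least one neighbor). Then the consistent samples of U with respect to the matching constraint {A → B, B → A} are in bijection with the perfect matchings of G, and the number of perfect matchings of G equals Pr_U({A→B, B→A}) · ∏_{v∈V_L} |N_v|. -/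
/-!
A sample has positive probability exactly when it picks a neighbour for every left vertex, and
each such sample has probability `∏ v, 1 / |N_v|`. Since `|V_L| = |V_R|`, an injective sample is
bijective, so the consistent samples are the perfect matchings and the probability of the
constraint is their number divided by `∏ v, |N_v|`.
-/

open Finset

section NeighborWeight

variable {α β : Type*} [Fintype β] (E : α → β → Prop) [DecidableRel E]

noncomputable def neighborWeight (v : α) (w : β) : ℝ :=
  if E v w then 1 / (#{w | E v w} : ℝ) else 0

variable {E}

lemma card_neighbors_pos {v : α} {w : β} (h : E v w) : 0 < (#{w | E v w} : ℝ) := by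
  exact_mod_cast card_pos.2 ⟨w, by simpa using h⟩

lemma neighborWeight_nonneg (v : α) (w : β) : 0 ≤ neighborWeight E v w := by
  unfold neighborWeight; split_ifs <;> positivity

lemma neighborWeight_eq_zero_iff {v : α} {w : β} : neighborWeight E v w = 0 ↔ ¬E v w := by
  unfold neighborWeight
  split_ifs with h
  · simp [h, (card_neighbors_pos h).ne']
  · simp [h]

lemma neighborWeight_mul_card {v : α} {w : β} (h : E v w) :
    neighborWeight E v w * #{w | E v w} = 1 := by
  simp [neighborWeight, h, (card_neighbors_pos h).ne']

variable [Fintype α]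

lemma prod_neighborWeight_pos_iff (r : α → β) :
    0 < ∏ v, neighborWeight E v (r v) ↔ ∀ v, E v (r v) := by
  rw [(prod_nonneg fun v _ => neighborWeight_nonneg v (r v)).lt_iff_ne', prod_ne_zero_iff]
  simp [neighborWeight_eq_zero_iff]

lemma sum_prod_neighborWeight_mul_prod_card (S : Finset (α → β)) :
    (∑ r ∈ S, ∏ v, neighborWeight E v (r v)) * ∏ v, (#{w | E v w} : ℝ)
      = #{r ∈ S | ∀ v, E v (r v)} := by
  rw [sum_mul, natCast_card_filter]
  refine sum_congr rfl fun r _ => ?_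
  split_ifs with h
  · rw [← prod_mul_distrib]
    exact prod_eq_one fun v _ => neighborWeight_mul_card (h v)
  · obtain ⟨v, hv⟩ := not_forall.1 h
    rw [prod_eq_zero (mem_univ v) (neighborWeight_eq_zero_iff.2 hv : neighborWeight E v (r v) = 0),
      zero_mul]

end NeighborWeight

open Classical in
theorem stmt3_general {VL VR : Type} [Fintype VL] [Fintype VR] [DecidableEq VL] [DecidableEq VR]
    (hcard : Fintype.card VL = Fintype.card VR)
    (E : VL → VR → Prop) :
    let Nv : VL → Finset VR := fun v => Finset.univ.filter (fun w => E v w)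
    let p : VL → VR → ℝ := fun v w => if E v w then 1 / ((Nv v).card : ℝ) else 0
    -- the consistent samples coincide with the perfect matchings
    (Finset.univ.filter
        (fun r : VL → VR => 0 < ∏ v : VL, p v (r v) ∧ Function.Injective r)
      = Finset.univ.filter
        (fun M : VL → VR => Function.Bijective M ∧ ∀ v : VL, E v (M v)))
    -- counting: #PM = Pr_U(F) · ∏ |N_v|
    ∧ ((Finset.univ.filter
          (fun M : VL → VR => Function.Bijective M ∧ ∀ v : VL, E v (M v))).card : ℝ)
        = (∑ r ∈ Finset.univ.filter (fun r : VL → VR => Function.Injective r),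
            ∏ v : VL, p v (r v))
          * ∏ v : VL, ((Nv v).card : ℝ) := by
  intro Nv p
  have hbij (r : VL → VR) : Function.Bijective r ↔ Function.Injective r :=
    ⟨fun h => h.1, fun h => (Fintype.bijective_iff_injective_and_card r).2 ⟨h, hcard⟩⟩
  constructor
  · ext r
    simp only [mem_filter, mem_univ, true_and, hbij]
    rw [show (0 < ∏ v, p v (r v)) ↔ _ from prod_neighborWeight_pos_iff r, and_comm]
  · refine Eq.symm ((sum_prod_neighborWeight_mul_prod_card (E := E) _).trans ?_)
    rw [filter_filter]
    simp only [hbij]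

open Classical in
/-- Let `G = (V_L, V_R, E)` be a bipartite graph with `|V_L| = |V_R|` and every
left vertex having a neighbor, and let `U` be the CIR over `{A, ?B}` with one tuple per `v ∈ V_L`,
`U[v][A] = v`, and `U[v][?B]` uniform over the neighbor set `N_v`.  Then the consistent samples of
`U` w.r.t. the matching constraint `{A → B, B → A}` are exactly (in bijection with) the perfect
matchings of `G`, and the number of perfect matchings equals
`Pr_U({A→B, B→A}) · ∏_{v∈V_L} |N_v|`.  (Since `A`-values are distinct, a sample satisfies the
matching constraint iff it is injective.) -/
theorem stmt3 {VL VR : Type} [Fintype VL] [Fintype VR] [DecidableEq VL] [DecidableEq VR]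
    (hcard : Fintype.card VL = Fintype.card VR)
    (E : VL → VR → Prop)
    (hne : ∀ v : VL, ∃ w : VR, E v w) :
    let Nv : VL → Finset VR := fun v => Finset.univ.filter (fun w => E v w)
    let p : VL → VR → ℝ := fun v w => if E v w then 1 / ((Nv v).card : ℝ) else 0
    -- the consistent samples coincide with the perfect matchings
    (Finset.univ.filter
        (fun r : VL → VR => 0 < ∏ v : VL, p v (r v) ∧ Function.Injective r)
      = Finset.univ.filter
        (fun M : VL → VR => Function.Bijective M ∧ ∀ v : VL, E v (M v)))
    -- counting: #PM = Pr_U(F) · ∏ |N_v|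
    ∧ ((Finset.univ.filter
          (fun M : VL → VR => Function.Bijective M ∧ ∀ v : VL, E v (M v))).card : ℝ)
        = (∑ r ∈ Finset.univ.filter (fun r : VL → VR => Function.Injective r),
            ∏ v : VL, p v (r v))
          * ∏ v : VL, ((Nv v).card : ℝ) :=
  stmt3_general hcard E
end

section
/- Let F = F₁ ∪ F₂ be a set of functional dependencies over a relation schema R such that every attribute in Att(F₁) ∩ Att(F₂) is certain. Let U be a CIR over R, U₁ = π_{Att(F₁)}U, and U₂ = π_{Att(F₂)}U. Then U is possibly consistent with respect to F if and only if U₁ is possibly consistent with respect to F₁ and U₂ is possibly consistent with respect to F₂. -/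
/-!
Samples of the two projections are first extended, cell by cell, to positive-probability
samples of all of `U`. Gluing them — the first on `Att(F₁)`, the second elsewhere — gives a
sample of `U` that agrees with the first on `Att(F₁)` and, because the shared attributes are
certain, with the second on `Att(F₂)`. Whether a sample satisfies an FD set depends only on its
values on the attributes of that set, so the glued sample satisfies `F₁ ∪ F₂`.
-/

section FunctionalDependencies

variable {ι Att V : Type*}

def fdAttrs [DecidableEq Att] (F : Finset (Finset Att × Finset Att)) : Finset Att :=
  F.sup fun fd => fd.1 ∪ fd.2

def SatisfiesFDs (F : Finset (Finset Att × Finset Att)) (s : ι → Att → V) : Prop :=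
  ∀ fd ∈ F, ∀ i j : ι, (∀ a ∈ fd.1, s i a = s j a) → ∀ a ∈ fd.2, s i a = s j a

theorem subset_fdAttrs [DecidableEq Att] {F : Finset (Finset Att × Finset Att)}
    {fd : Finset Att × Finset Att} (h : fd ∈ F) : fd.1 ∪ fd.2 ⊆ fdAttrs F :=
  Finset.le_sup (f := fun fd : Finset Att × Finset Att => fd.1 ∪ fd.2) h

theorem SatisfiesFDs.of_eqOn [DecidableEq Att] {F : Finset (Finset Att × Finset Att)}
    {s t : ι → Att → V} (hs : SatisfiesFDs F s)
    (hst : ∀ i, ∀ a ∈ fdAttrs F, s i a = t i a) : SatisfiesFDs F t := by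
  intro fd hfd i j hlhs a ha
  have hsub := subset_fdAttrs hfd
  have hlhs' : ∀ b ∈ fd.1, s i b = s j b := fun b hb => by
    have hb' := hsub (Finset.mem_union_left _ hb)
    rw [hst i b hb', hst j b hb']
    exact hlhs b hb
  have ha' := hsub (Finset.mem_union_right _ ha)
  rw [← hst i a ha', ← hst j a ha']
  exact hs fd hfd i j hlhs' a ha

theorem satisfiesFDs_union [DecidableEq Att] {F₁ F₂ : Finset (Finset Att × Finset Att)}
    {s : ι → Att → V} :
    SatisfiesFDs (F₁ ∪ F₂) s ↔ SatisfiesFDs F₁ s ∧ SatisfiesFDs F₂ s := by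
  simp only [SatisfiesFDs, Finset.mem_union, or_imp, forall_and]

end FunctionalDependencies

section Samples

variable {ι Att V : Type*}

theorem exists_pos_extension {p : ι → Att → V → ℝ} (hpos : ∀ i a, ∃ v, 0 < p i a v)
    {A : Finset Att} {s : ι → Att → V} (hs : ∀ i, ∀ a ∈ A, 0 < p i a (s i a)) :
    ∃ t : ι → Att → V, (∀ i a, 0 < p i a (t i a)) ∧
      ∀ i, ∀ a ∈ A, t i a = s i a := by
  classical
  refine ⟨fun i a => if a ∈ A then s i a else (hpos i a).choose, fun i a => ?_,
    fun i a ha => if_pos ha⟩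
  dsimp only
  split_ifs with ha
  · exact hs i a ha
  · exact (hpos i a).choose_spec

variable [DecidableEq Att]

def glue (A : Finset Att) (s t : ι → Att → V) : ι → Att → V :=
  fun i a => if a ∈ A then s i a else t i a

theorem glue_eq_left {A : Finset Att} {s t : ι → Att → V} {i : ι} {a : Att} (ha : a ∈ A) :
    glue A s t i a = s i a :=
  if_pos ha

theorem glue_eq_right {A B : Finset Att} {s t : ι → Att → V}
    (hst : ∀ i, ∀ a ∈ A ∩ B, s i a = t i a) {i : ι} {a : Att} (ha : a ∈ B) :
    glue A s t i a = t i a := by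
  unfold glue
  split_ifs with hA
  · exact hst i a (Finset.mem_inter.2 ⟨hA, ha⟩)
  · rfl

theorem glue_mem {P : ι → Att → V → Prop} {A : Finset Att} {s t : ι → Att → V}
    (hs : ∀ i a, P i a (s i a)) (ht : ∀ i a, P i a (t i a)) (i : ι) (a : Att) :
    P i a (glue A s t i a) := by
  unfold glue
  split_ifs
  exacts [hs i a, ht i a]

end Samples

/-- Let `F = F₁ ∪ F₂` over schema `R` with all attributes in
`Att(F₁) ∩ Att(F₂)` certain (here: deterministic cells, i.e. cells with a unique
positive-probability value).  Then the CIR `U` is possibly consistent w.r.t. `F` iff the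
projection `U₁ = π_{Att(F₁)}U` is possibly consistent w.r.t. `F₁` and `U₂ = π_{Att(F₂)}U`
is possibly consistent w.r.t. `F₂`.  (A sample of a projection constrains only the cells of
the projected attributes.) -/
theorem stmt4 {Att V ι : Type} [DecidableEq Att]
    (F1 F2 : Finset (Finset Att × Finset Att))
    (p : ι → Att → V → ℝ)
    (hpos : ∀ (i : ι) (a : Att), ∃ v : V, 0 < p i a v)
    (hdet : ∀ a ∈ (F1.sup fun fd => fd.1 ∪ fd.2) ∩ (F2.sup fun fd => fd.1 ∪ fd.2),
      ∀ i : ι, ∃ v : V, ∀ w : V, 0 < p i a w ↔ w = v) :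
    ((∃ s : ι → Att → V, (∀ (i : ι) (a : Att), 0 < p i a (s i a)) ∧
        ∀ fd ∈ F1 ∪ F2, ∀ i j : ι,
          (∀ a ∈ fd.1, s i a = s j a) → ∀ a ∈ fd.2, s i a = s j a)
      ↔ ((∃ s : ι → Att → V,
            (∀ i : ι, ∀ a ∈ (F1.sup fun fd => fd.1 ∪ fd.2), 0 < p i a (s i a)) ∧
            ∀ fd ∈ F1, ∀ i j : ι,
              (∀ a ∈ fd.1, s i a = s j a) → ∀ a ∈ fd.2, s i a = s j a)
          ∧ (∃ s : ι → Att → V,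
            (∀ i : ι, ∀ a ∈ (F2.sup fun fd => fd.1 ∪ fd.2), 0 < p i a (s i a)) ∧
            ∀ fd ∈ F2, ∀ i j : ι,
              (∀ a ∈ fd.1, s i a = s j a) → ∀ a ∈ fd.2, s i a = s j a))) := by
  constructor
  · rintro ⟨s, hs, hF⟩
    obtain ⟨hF1, hF2⟩ := satisfiesFDs_union.1 hF
    exact ⟨⟨s, fun i a _ => hs i a, hF1⟩, ⟨s, fun i a _ => hs i a, hF2⟩⟩
  · rintro ⟨⟨s1, hs1, hF1⟩, ⟨s2, hs2, hF2⟩⟩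
    obtain ⟨t1, ht1, e1⟩ := exists_pos_extension hpos hs1
    obtain ⟨t2, ht2, e2⟩ := exists_pos_extension hpos hs2
    have hcertain : ∀ i, ∀ a ∈ fdAttrs F1 ∩ fdAttrs F2, t1 i a = t2 i a := fun i a ha => by
      obtain ⟨v, hv⟩ := hdet a ha i
      exact ((hv _).1 (ht1 i a)).trans ((hv _).1 (ht2 i a)).symm
    refine ⟨glue (fdAttrs F1) t1 t2, glue_mem (P := fun i a v => 0 < p i a v) ht1 ht2,
      satisfiesFDs_union.2 ⟨?_, ?_⟩⟩
    · exact SatisfiesFDs.of_eqOn hF1 fun i a ha => by rw [glue_eq_left ha, e1 i a ha]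
    · exact SatisfiesFDs.of_eqOn hF2 fun i a ha => by rw [glue_eq_right hcertain ha, e2 i a ha]
end

section
/- Let U be a CIR over schema {?A, B}, where A is uncertain and B is certain. Construct U from a CNF formula φ = c₁ ∧ ⋯ ∧ c_m over variables x₁,…,x_n in which every clause is either all-positive or all-negative, as follows: for each all-positive clause c_i = y₁ ∨ ⋯ ∨ y_ℓ, add the tuple (y₁|⋯|y_ℓ, true), and for each all-negative clause c_i = ¬y₁ ∨ ⋯ ∨ ¬y_ℓ, add the tuple (y₁|⋯|y_ℓ, false), where y₁|⋯|y_ℓ denotes the uniform distribution over {y₁,…,y_ℓ}. Then U has a positive-probability sample satisfying the FD A → B if and only if φ is satisfiable. -/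
/-- (Reduction from non-mixed SAT.)  Given a CNF formula in which every clause
is either all-positive or all-negative, encode each clause `c` (with variable set `vars c` and
sign `sign c`: `true` for positive clauses, `false` for negative ones) as the tuple
`(y₁|⋯|y_ℓ, sign c)` of a CIR over `{?A, B}`, where the `?A`-cell is uniform over `vars c`.
Then `U` has a positive-probability sample satisfying the FD `A → B` iff the formula is
satisfiable. -/
theorem stmt7 {ι Var : Type} [Fintype ι] [DecidableEq Var]
    (vars : ι → Finset Var) (sign : ι → Bool)
    (hne : ∀ c : ι, (vars c).Nonempty) :
    (∃ g : ι → Var,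
        0 < ∏ c : ι, (if g c ∈ vars c then (1 : ℝ) / ((vars c).card : ℝ) else 0)
        ∧ ∀ c c' : ι, g c = g c' → sign c = sign c')
      ↔ ∃ τ : Var → Bool, ∀ c : ι, ∃ x ∈ vars c, τ x = sign c := by
  classical
  constructor
  · rintro ⟨g, hpos, hcons⟩
    have hmem : ∀ c : ι, g c ∈ vars c := by
      intro c
      by_contra h
      rw [Finset.prod_eq_zero (Finset.mem_univ c) (by simp [h])] at hpos
      exact lt_irrefl _ hpos
    refine ⟨fun x => if h : ∃ c, g c = x then sign h.choose else true, fun c => ?_⟩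
    refine ⟨g c, hmem c, ?_⟩
    have h : ∃ c', g c' = g c := ⟨c, rfl⟩
    simp only [dif_pos h]
    exact hcons _ _ h.choose_spec
  · rintro ⟨τ, hτ⟩
    choose g hg1 hg2 using hτ
    refine ⟨g, ?_, fun c c' h => by rw [← hg2 c, h, hg2 c']⟩
    apply Finset.prod_pos
    intro c _
    rw [if_pos (hg1 c)]
    have : (0:ℝ) < (vars c).card := by
      exact_mod_cast Finset.card_pos.mpr (hne c)
    positivity
end

section
/- Let φ = c₁ ∧ ⋯ ∧ c_m be a CNF formula. Construct a CIR U over schema {?A, ?B} with: for each clause c = d₁ ∨ ⋯ ∨ d_ℓ, a tuple (c, ⟨c,d₁⟩|⋯|⟨c,d_ℓ⟩); and for each pair of clause-literal pairs ⟨c,d⟩, ⟨c',d'⟩ with d and d' complementary literals of the same variable, a tuple (⟨c,d⟩|⟨c',d'⟩, ⟨c,d⟩|⟨c',d'⟩). Then U has a positive-probability sample satisfying the matching constraint {A → B, B → A} if and only if φ is satisfiable. -/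
/-!
If the matching constraint holds, every clause tuple's `B`-value picks a literal of its clause,
and no two clauses pick complementary literals `d`, `d'`: the conflict tuple for `⟨c,d⟩|⟨c',d'⟩`
has an `A`-value different from the clause values `c` and `c'`, so its `B`-value must differ
from both picks, yet it is one of them. A consistent choice of one literal per clause extends
to a satisfying assignment. Conversely, a satisfying assignment picks a true literal per clause,
and each conflict tuple takes, for both attributes, the side whose literal is false; then the
`B`-values of clause tuples are never shared with conflict tuples.
-/

open Function

theorem Sum.map_id_eq_iff_elim_eq {α β γ : Type*} {s : α → γ} {f : β → γ}
    (hs : Injective s) (hsf : ∀ a b, s a ≠ f b) (t t' : α ⊕ β) :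
    Sum.map id f t = Sum.map id f t' ↔ Sum.elim s f t = Sum.elim s f t' := by
  rcases t with a | b <;> rcases t' with a' | b' <;>
    simp [hs.eq_iff, hsf, (hsf _ _).symm]

namespace CNFMatching

variable {ι Var : Type} {lits : ι → Finset (Var × Bool)}

variable (lits) in
/-- Indexes the conflict tuples `(⟨c,d⟩|⟨c',d'⟩, ⟨c,d⟩|⟨c',d'⟩)` of `U`. -/
abbrev ConflictPair :=
  {q : (ι × (Var × Bool)) × (ι × (Var × Bool)) //
    q.1.2 ∈ lits q.1.1 ∧ q.2.2 ∈ lits q.2.1 ∧ q.1.2.1 = q.2.2.1 ∧ q.1.2.2 = !q.2.2.2}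

variable (lits) in
/-- A positive-probability sample of `U`, given by its `A`- and `B`-columns, that satisfies
`{A → B, B → A}`. -/
structure IsMatchingSample (rA rB : ι ⊕ ConflictPair lits → ι ⊕ (ι × (Var × Bool))) : Prop where
  clause_A : ∀ c, rA (.inl c) = .inl c
  clause_B : ∀ c, ∃ d ∈ lits c, rB (.inl c) = .inr (c, d)
  conflict_A : ∀ q : ConflictPair lits, rA (.inr q) = .inr q.val.1 ∨ rA (.inr q) = .inr q.val.2
  conflict_B : ∀ q : ConflictPair lits, rB (.inr q) = .inr q.val.1 ∨ rB (.inr q) = .inr q.val.2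
  matching : ∀ t t', rA t = rA t' ↔ rB t = rB t'

theorem IsMatchingSample.polarity_eq_of_var_eq
    {rA rB : ι ⊕ ConflictPair lits → ι ⊕ (ι × (Var × Bool))} (h : IsMatchingSample lits rA rB)
    {c c' : ι} {d d' : Var × Bool} (hd : d ∈ lits c) (hd' : d' ∈ lits c')
    (hc : rB (.inl c) = .inr (c, d)) (hc' : rB (.inl c') = .inr (c', d')) (hvar : d.1 = d'.1) :
    d.2 = d'.2 := by
  by_contra hpol
  let q : ConflictPair lits := ⟨((c, d), (c', d')), hd, hd', hvar, Bool.eq_not_iff.2 hpol⟩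
  have hA (e : ι) : rA (.inl e) ≠ rA (.inr q) := by
    rw [h.clause_A]
    rcases h.conflict_A q with hq | hq <;> simp [hq]
  have hB (e : ι) : rB (.inl e) ≠ rB (.inr q) := fun he => hA e ((h.matching _ _).2 he)
  rcases h.conflict_B q with hq | hq
  · exact hB c (hc.trans hq.symm)
  · exact hB c' (hc'.trans hq.symm)

theorem IsMatchingSample.satisfiable
    {rA rB : ι ⊕ ConflictPair lits → ι ⊕ (ι × (Var × Bool))} (h : IsMatchingSample lits rA rB) :
    ∃ τ : Var → Bool, ∀ c : ι, ∃ d ∈ lits c, τ d.1 = d.2 := by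
  choose pick hpick hrB using h.clause_B
  have hfactors : FactorsThrough (fun c => (pick c).2) (fun c => (pick c).1) :=
    fun c c' => h.polarity_eq_of_var_eq (hpick c) (hpick c') (hrB c) (hrB c')
  exact ⟨extend (fun c => (pick c).1) (fun c => (pick c).2) fun _ => false,
    fun c => ⟨pick c, hpick c, hfactors.extend_apply _ c⟩⟩

def ConflictPair.falsified (τ : Var → Bool) (q : ConflictPair lits) : ι × (Var × Bool) :=
  if τ q.val.1.2.1 = q.val.1.2.2 then q.val.2 else q.val.1

theorem ConflictPair.falsified_eq_or (τ : Var → Bool) (q : ConflictPair lits) :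
    q.falsified τ = q.val.1 ∨ q.falsified τ = q.val.2 := by
  unfold falsified
  split_ifs
  exacts [.inr rfl, .inl rfl]

theorem ConflictPair.falsified_ne (τ : Var → Bool) (q : ConflictPair lits) :
    τ (q.falsified τ).2.1 ≠ (q.falsified τ).2.2 := by
  obtain ⟨-, -, hvar, hpol⟩ := q.property
  unfold falsified
  split_ifs with h
  · rw [← hvar, h, hpol]
    exact Bool.not_ne_self _
  · exact h

theorem exists_isMatchingSample {τ : Var → Bool} (hτ : ∀ c : ι, ∃ d ∈ lits c, τ d.1 = d.2) :
    ∃ rA rB, IsMatchingSample lits rA rB := by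
  choose pick hpick hτpick using hτ
  have hdisjoint (c : ι) (q : ConflictPair lits) : (c, pick c) ≠ q.falsified τ :=
    fun hcq => q.falsified_ne τ (hcq ▸ hτpick c)
  refine ⟨Sum.map id (ConflictPair.falsified τ),
    Sum.inr ∘ Sum.elim (fun c => (c, pick c)) (ConflictPair.falsified τ),
    ⟨fun c => rfl, fun c => ⟨pick c, hpick c, rfl⟩, ?_, ?_, fun t t' => ?_⟩⟩
  · exact fun q => (q.falsified_eq_or τ).imp (congrArg _) (congrArg _)
  · exact fun q => (q.falsified_eq_or τ).imp (congrArg _) (congrArg _)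
  · rw [comp_apply, comp_apply, Sum.inr_injective.eq_iff]
    exact Sum.map_id_eq_iff_elim_eq (fun c c' hcc' => congrArg Prod.fst hcc') hdisjoint t t'

end CNFMatching

/-- (Reduction from SAT to possible consistency for `?A ↔ ?B`.)
Given a CNF formula with clause index type `ι`, where clause `c` has literal set `lits c`
(a literal is a pair `(variable, polarity)`), build the CIR `U` over `{?A, ?B}` with:
a tuple `(c, ⟨c,d₁⟩|⋯|⟨c,d_ℓ⟩)` for every clause `c`, and a tuple
`(⟨c,d⟩|⟨c',d'⟩, ⟨c,d⟩|⟨c',d'⟩)` for every conflicting pair of clause-literal pairs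
(`d`, `d'` literals of the same variable with opposite polarity).  Then `U` has a
positive-probability sample satisfying the matching constraint `{A → B, B → A}` iff the
formula is satisfiable. -/
theorem stmt8 {ι Var : Type}
    (lits : ι → Finset (Var × Bool)) :
    let Q := {q : (ι × (Var × Bool)) × (ι × (Var × Bool)) //
        q.1.2 ∈ lits q.1.1 ∧ q.2.2 ∈ lits q.2.1 ∧
        q.1.2.1 = q.2.2.1 ∧ q.1.2.2 = !q.2.2.2}
    (∃ rA rB : ι ⊕ Q → ι ⊕ (ι × (Var × Bool)),
        (∀ c : ι, rA (Sum.inl c) = Sum.inl c) ∧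
        (∀ c : ι, ∃ d ∈ lits c, rB (Sum.inl c) = Sum.inr (c, d)) ∧
        (∀ q : Q, rA (Sum.inr q) = Sum.inr q.val.1 ∨ rA (Sum.inr q) = Sum.inr q.val.2) ∧
        (∀ q : Q, rB (Sum.inr q) = Sum.inr q.val.1 ∨ rB (Sum.inr q) = Sum.inr q.val.2) ∧
        (∀ t t' : ι ⊕ Q, rA t = rA t' ↔ rB t = rB t'))
      ↔ ∃ τ : Var → Bool, ∀ c : ι, ∃ d ∈ lits c, τ d.1 = d.2 := by
  intro Q
  constructor
  · rintro ⟨rA, rB, hA, hB, hqA, hqB, hmatch⟩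
    exact CNFMatching.IsMatchingSample.satisfiable (lits := lits) ⟨hA, hB, hqA, hqB, hmatch⟩
  · rintro ⟨τ, hτ⟩
    obtain ⟨rA, rB, h⟩ := CNFMatching.exists_isMatchingSample hτ
    exact ⟨rA, rB, h.clause_A, h.clause_B, h.conflict_A, h.conflict_B, h.matching⟩
end

section
/- Let F be a set of FDs over relation schema R such that every FD in F has a nonempty left-hand side (no consensus FDs) and F contains at least one nontrivial FD. Let X → Z be a nontrivial FD in F with X minimal (with respect to set containment) among left-hand sides of FDs in F, and let Y = X⁺_F ∖ X. Then X is nonempty, Y is nonempty, and exactly one of the following holds: (1) F implies Y → A for some attribute A ∈ X, or (2) Y⁺_F = Y. -/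
/-
Write `Y = X⁺ \ X`. Since `Y ⊆ X⁺` and `X⁺` is closed, `Y⁺ ⊆ X⁺ = Y ∪ X`; so either `Y⁺` meets `X`,
or `Y⁺ = Y`, and not both because `Y` is disjoint from `X`. `X` is nonempty as a left-hand side of
`F`, and `Y` is nonempty because it contains an attribute of `Z \ X`.
-/

/-- A set `T` of attributes is closed under a set `F` of FDs. -/
def FdClosed {Att : Type} (F : Finset (Finset Att × Finset Att)) (T : Set Att) : Prop :=
  ∀ fd ∈ F, ↑fd.1 ⊆ T → ↑fd.2 ⊆ T

/-- The closure `S⁺_F` of an attribute set `S` under a set `F` of FDs: the least superset of `S`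
closed under `F`.  (`A ∈ FdCl F S` iff `F` implies `S → A`.) -/
def FdCl {Att : Type} (F : Finset (Finset Att × Finset Att)) (S : Set Att) : Set Att :=
  ⋂₀ {T : Set Att | S ⊆ T ∧ FdClosed F T}

section FdClosure

variable {Att : Type} (F : Finset (Finset Att × Finset Att))

lemma subset_fdCl (S : Set Att) : S ⊆ FdCl F S :=
  fun _ ha => Set.mem_sInter.2 fun _ hT => hT.1 ha

lemma fdClosed_fdCl (S : Set Att) : FdClosed F (FdCl F S) := by
  intro fd hfd hlhs a ha
  refine Set.mem_sInter.2 fun T hT => hT.2 fd hfd (fun b hb => ?_) ha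
  exact Set.mem_sInter.1 (hlhs hb) T hT

lemma fdCl_subset_of_subset {S T : Set Att} (hST : S ⊆ T) (hT : FdClosed F T) :
    FdCl F S ⊆ T :=
  Set.sInter_subset_of_mem ⟨hST, hT⟩

lemma rhs_subset_fdCl {X Z : Finset Att} (hXZ : (X, Z) ∈ F) : (↑Z : Set Att) ⊆ FdCl F ↑X :=
  fdClosed_fdCl F _ (X, Z) hXZ (subset_fdCl F _)

lemma fdCl_fdCl_diff_subset (S : Set Att) : FdCl F (FdCl F S \ S) ⊆ (FdCl F S \ S) ∪ S := by
  rw [Set.sdiff_union_self]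
  exact (fdCl_subset_of_subset F Set.sdiff_subset (fdClosed_fdCl F S)).trans
    Set.subset_union_left

lemma fdCl_fdCl_diff_meets_or_eq (S : Set Att) :
    (∃ A ∈ S, A ∈ FdCl F (FdCl F S \ S)) ∨ FdCl F (FdCl F S \ S) = FdCl F S \ S := by
  by_cases h : ∃ A ∈ S, A ∈ FdCl F (FdCl F S \ S)
  · exact Or.inl h
  · refine Or.inr (Set.Subset.antisymm (fun b hb => ?_) (subset_fdCl F _))
    exact (fdCl_fdCl_diff_subset F S hb).resolve_right fun hbS => h ⟨b, hbS, hb⟩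

end FdClosure

theorem stmt10_general {Att : Type}
    (F : Finset (Finset Att × Finset Att))
    (hlhs : ∀ fd ∈ F, fd.1.Nonempty)
    (X Z : Finset Att) (hXZ : (X, Z) ∈ F) (hnt : ¬ ↑Z ⊆ (↑X : Set Att)) :
    let Y : Set Att := FdCl F ↑X \ ↑X
    X.Nonempty ∧ Y.Nonempty
      ∧ ((∃ A ∈ X, A ∈ FdCl F Y) ∨ FdCl F Y = Y)
      ∧ ¬ ((∃ A ∈ X, A ∈ FdCl F Y) ∧ FdCl F Y = Y) := by
  intro Y
  obtain ⟨a, haZ, haX⟩ := Set.not_subset.1 hnt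
  refine ⟨hlhs (X, Z) hXZ, ⟨a, rhs_subset_fdCl F hXZ haZ, haX⟩,
    fdCl_fdCl_diff_meets_or_eq F ↑X, ?_⟩
  rintro ⟨⟨A, hAX, hAY⟩, hYY⟩
  exact (hYY ▸ hAY).2 hAX

/-- Let `F` have no consensus FDs (all left-hand sides nonempty) and contain a
nontrivial FD `X → Z` with `X` minimal (w.r.t. containment) among left-hand sides of `F`, and let
`Y = X⁺_F ∖ X`.  Then `X` is nonempty, `Y` is nonempty, and exactly one of the following holds:
(1) `F` implies `Y → A` for some `A ∈ X`, or (2) `Y⁺_F = Y`. -/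
theorem stmt10 {Att : Type}
    (F : Finset (Finset Att × Finset Att))
    (hlhs : ∀ fd ∈ F, fd.1.Nonempty)
    (X Z : Finset Att) (hXZ : (X, Z) ∈ F) (hnt : ¬ ↑Z ⊆ (↑X : Set Att))
    (hmin : ∀ fd ∈ F, ¬ fd.1 ⊂ X) :
    let Y : Set Att := FdCl F ↑X \ ↑X
    X.Nonempty ∧ Y.Nonempty
      ∧ ((∃ A ∈ X, A ∈ FdCl F Y) ∨ FdCl F Y = Y)
      ∧ ¬ ((∃ A ∈ X, A ∈ FdCl F Y) ∧ FdCl F Y = Y) :=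
  stmt10_general F hlhs X Z hXZ hnt
end

section
/- Let F be a set of unary FDs over schema R (each FD has a single attribute on each side, obtained by splitting right-hand sides), and suppose every uncertain attribute of R is either a sink (its closure under F is itself) or F-equivalent to some certain attribute. Define, for each uncertain non-sink attribute ?A, a certain attribute c(?A) equivalent to it, and let F' be obtained from F by replacing every occurrence of each such ?A by c(?A). Then F is logically equivalent (satisfied by exactly the same relations over R) to F' ∪ ⋃_{?A non-sink uncertain} {?A → c(?A), c(?A) → ?A}. -/
/-!
Every attribute `a` is `F`-equivalent to its representative `ρ a` (trivially when `ρ a = a`),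
and FD implication is closure membership. So a relation satisfying `F` agrees on `a` exactly
when it agrees on `ρ a`, and it satisfies each renamed FD `ρ b → ρ c`, since `b → c ∈ F` and
the equivalences `ρ b ↔ b`, `c ↔ ρ c` chain to `ρ b → ρ c`. Conversely, the equivalences let
one transport each renamed FD back to the FD of `F` it came from.
-/

/-- The closure of a set `S` of attributes under a set `F` of unary FDs:
`b ∈ UCl F S` iff `F` implies `S → b`. -/
def UCl {Att : Type} (F : Finset (Att × Att)) (S : Set Att) : Set Att :=
  ⋂₀ {T : Set Att | S ⊆ T ∧ ∀ fd ∈ F, fd.1 ∈ T → fd.2 ∈ T}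

namespace UCl

variable {Att : Type} {F : Finset (Att × Att)}

theorem subset_self (S : Set Att) : S ⊆ UCl F S :=
  fun _ hx _ hT => hT.1 hx

theorem self_mem_singleton (a : Att) : a ∈ UCl F {a} :=
  subset_self {a} rfl

theorem mem_of_mem_fst {S : Set Att} {fd : Att × Att} (hfd : fd ∈ F) (h : fd.1 ∈ UCl F S) :
    fd.2 ∈ UCl F S :=
  fun T hT => hT.2 fd hfd (h T hT)

theorem subset_of_closed {S T : Set Att} (hST : S ⊆ T) (hT : ∀ fd ∈ F, fd.1 ∈ T → fd.2 ∈ T) :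
    UCl F S ⊆ T :=
  fun _ hx => hx T ⟨hST, hT⟩

theorem singleton_subset_of_mem {S : Set Att} {c : Att} (hc : c ∈ UCl F S) :
    UCl F {c} ⊆ UCl F S :=
  subset_of_closed (Set.singleton_subset_iff.mpr hc) fun _ hfd => mem_of_mem_fst hfd

end UCl

def Satisfies {Att ι V : Type} (F : Finset (Att × Att)) (r : ι → Att → V) : Prop :=
  ∀ fd ∈ F, ∀ i j : ι, r i fd.1 = r j fd.1 → r i fd.2 = r j fd.2

namespace Satisfies

variable {Att ι V : Type} {F : Finset (Att × Att)} {r : ι → Att → V}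

theorem eq_of_mem_UCl (hsat : Satisfies F r) {a b : Att} (hb : b ∈ UCl F {a}) {i j : ι}
    (hab : r i a = r j a) : r i b = r j b :=
  UCl.subset_of_closed (T := {x | r i x = r j x}) (Set.singleton_subset_iff.mpr hab)
    (fun fd hfd => hsat fd hfd i j) hb

theorem eq_iff_of_UCl_eq (hsat : Satisfies F r) {a b : Att} (hab : UCl F {a} = UCl F {b})
    (i j : ι) : r i a = r j a ↔ r i b = r j b :=
  ⟨hsat.eq_of_mem_UCl (hab ▸ UCl.self_mem_singleton b),
    hsat.eq_of_mem_UCl (hab ▸ UCl.self_mem_singleton a)⟩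

theorem image_of_UCl_eq [DecidableEq Att] (hsat : Satisfies F r) {ρ : Att → Att}
    (hρ : ∀ a, UCl F {ρ a} = UCl F {a}) :
    Satisfies (F.image fun fd => (ρ fd.1, ρ fd.2)) r := by
  simp only [Satisfies, Finset.forall_mem_image]
  intro fd hfd i j hij
  have hsnd : fd.2 ∈ UCl F {ρ fd.1} :=
    hρ fd.1 ▸ UCl.mem_of_mem_fst hfd (UCl.self_mem_singleton fd.1)
  have hρsnd : ρ fd.2 ∈ UCl F {ρ fd.1} :=
    UCl.singleton_subset_of_mem hsnd (hρ fd.2 ▸ UCl.self_mem_singleton (ρ fd.2))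
  exact hsat.eq_of_mem_UCl hρsnd hij

theorem of_image [DecidableEq Att] {ρ : Att → Att}
    (himg : Satisfies (F.image fun fd => (ρ fd.1, ρ fd.2)) r)
    (hρ : ∀ a (i j : ι), r i a = r j a ↔ r i (ρ a) = r j (ρ a)) : Satisfies F r := by
  intro fd hfd i j hij
  exact (hρ fd.2 i j).mpr
    (himg _ (Finset.mem_image_of_mem _ hfd) i j ((hρ fd.1 i j).mp hij))

end Satisfies

/-- Let `F` be a set of unary FDs over a schema in which every uncertain
attribute is either a sink or `F`-equivalent to a certain attribute.  Choose, via `ρ`, for each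
uncertain non-sink attribute an equivalent certain attribute (`ρ` is the identity on all other
attributes).  Let `F'` be `F` with every attribute replaced by its `ρ`-image.  Then `F` is
logically equivalent (satisfied by exactly the same relations) to
`F' ∪ ⋃_{?A uncertain non-sink} {?A → ρ(?A), ρ(?A) → ?A}`. -/
theorem stmt11 {Att : Type} [DecidableEq Att]
    (Certain : Att → Prop)
    (F : Finset (Att × Att)) (ρ : Att → Att)
    (hρcert : ∀ a, Certain a → ρ a = a)
    (hρsink : ∀ a, ¬ Certain a → UCl F {a} = {a} → ρ a = a)
    (hρns : ∀ a, ¬ Certain a → UCl F {a} ≠ {a} →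
      Certain (ρ a) ∧ UCl F {ρ a} = UCl F {a}) :
    ∀ (ι V : Type) (r : ι → Att → V),
      (∀ fd ∈ F, ∀ i j : ι, r i fd.1 = r j fd.1 → r i fd.2 = r j fd.2)
        ↔ ((∀ fd ∈ F.image (fun fd => (ρ fd.1, ρ fd.2)), ∀ i j : ι,
              r i fd.1 = r j fd.1 → r i fd.2 = r j fd.2)
            ∧ ∀ a : Att, ¬ Certain a → UCl F {a} ≠ {a} →
                ∀ i j : ι, (r i a = r j a ↔ r i (ρ a) = r j (ρ a))) := by
  have hcases : ∀ a, ρ a = a ∨ (¬ Certain a ∧ UCl F {a} ≠ {a}) := by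
    intro a
    by_cases hc : Certain a
    · exact .inl (hρcert a hc)
    by_cases hs : UCl F {a} = {a}
    · exact .inl (hρsink a hc hs)
    exact .inr ⟨hc, hs⟩
  have hρ : ∀ a, UCl F {ρ a} = UCl F {a} := fun a =>
    (hcases a).elim (fun hfix => by rw [hfix]) fun ⟨hc, hs⟩ => (hρns a hc hs).2
  intro ι V r
  refine ⟨fun (hsat : Satisfies F r) => ⟨hsat.image_of_UCl_eq hρ,
    fun a _ _ => hsat.eq_iff_of_UCl_eq (hρ a).symm⟩, fun ⟨himg, hagree⟩ => ?_⟩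
  refine Satisfies.of_image himg fun a i j => ?_
  rcases hcases a with hfix | ⟨hc, hs⟩
  · rw [hfix]
  · exact hagree a hc hs i j
end
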